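/- arXiv:2111.11498 — 3 statements merged into one kernel-verified Lean document; each statement's English description precedes it below -/
import Mathlib

section
/- Let V be a 2-divisible abelian group with trivial 2-torsion and let E be a finite elementary abelian 2-group acting on V by automorphisms. Then V is the internal direct sum over group homomorphisms λ : E → {±1} of the weight spaces V_λ = {v ∈ V : ∀ e ∈ E, e·v = λ(e)·v}. -/
section aux

variable {V : Type*} [AddCommGroup V]

lemma aux_pow_inj (htor : ∀ v : V, 2 • v = 0 → v = 0) (n : ℕ) {a b : V}
    (h : (2 ^ n : ℤ) • a = (2 ^ n : ℤ) • b) : a = b := by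
  induction n with
  | zero => simpa using h
  | succ n ih =>
    apply ih
    have h2 : (2 : ℤ) • ((2 ^ n : ℤ) • a - (2 ^ n : ℤ) • b) = 0 := by
      rw [smul_sub, smul_smul, smul_smul, ← pow_succ', h, sub_self]
    have := htor ((2 ^ n : ℤ) • a - (2 ^ n : ℤ) • b) (by
      have : (2 : ℕ) • ((2 ^ n : ℤ) • a - (2 ^ n : ℤ) • b)
          = (2 : ℤ) • ((2 ^ n : ℤ) • a - (2 ^ n : ℤ) • b) := by
        norm_cast
      rw [this, h2])
    exact sub_eq_zero.mp this

lemma aux_pow_surj (hdiv : ∀ v : V, ∃ w : V, 2 • w = v) (n : ℕ) (v : V) :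
    ∃ w : V, (2 ^ n : ℤ) • w = v := by
  induction n with
  | zero => exact ⟨v, by simp⟩
  | succ n ih =>
    obtain ⟨w, hw⟩ := ih
    obtain ⟨u, hu⟩ := hdiv w
    refine ⟨u, ?_⟩
    rw [← hw, ← hu, pow_succ, mul_smul]
    norm_cast

end aux

/-- The sign character `Multiplicative (ZMod 2) →* ℤˣ`. -/
def auxChi : Multiplicative (ZMod 2) →* ℤˣ where
  toFun a := if a.toAdd = 0 then 1 else -1
  map_one' := by decide
  map_mul' := by decide

lemma aux_sep {E : Type*} [Group E] (hE : ∀ e : E, e * e = 1) {e : E} (he : e ≠ 1) :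
    ∃ lam : E →* ℤˣ, lam e = -1 := by
  have hinv : ∀ x : E, x⁻¹ = x := fun x => inv_eq_of_mul_eq_one_right (hE x)
  letI : CommGroup E :=
    { ‹Group E› with
      mul_comm := fun a b => by
        calc a * b = (a * b)⁻¹ := (hinv _).symm
          _ = b⁻¹ * a⁻¹ := mul_inv_rev a b
          _ = b * a := by rw [hinv, hinv] }
  letI : Module (ZMod 2) (Additive E) := AddCommGroup.zmodModule (by
    intro x
    rw [two_smul]
    show x + x = 0
    exact hE x.toMul)
  obtain ⟨φ, hφ⟩ : ∃ φ : Module.Dual (ZMod 2) (Additive E), φ (Additive.ofMul e) ≠ 0 := by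
    by_contra h
    push_neg at h
    exact he ((Module.forall_dual_apply_eq_zero_iff (ZMod 2) (Additive.ofMul e)).mp h)
  have hφ1 : φ (Additive.ofMul e) = 1 := by
    revert hφ; generalize φ (Additive.ofMul e) = a; revert a; decide
  refine ⟨auxChi.comp (AddMonoidHom.toMultiplicativeRight φ.toAddMonoidHom), ?_⟩
  simp [auxChi, hφ1]

lemma aux_sum_zero {G : Type*} [Group G] [Fintype G] (ν : G →* ℤˣ)
    (hν : ∃ g : G, ν g = -1) : ∑ g : G, ((ν g : ℤˣ) : ℤ) = 0 := by
  obtain ⟨g₀, hg₀⟩ := hν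
  have h : ∑ g : G, ((ν g : ℤˣ) : ℤ) = ∑ g : G, ((ν (g₀ * g) : ℤˣ) : ℤ) :=
    Fintype.sum_bijective (g₀ * ·) (Group.mulLeft_bijective g₀)
      (fun g => ((ν (g₀ * g) : ℤˣ) : ℤ)) (fun g => ((ν g : ℤˣ) : ℤ)) (fun g => rfl) |>.symm
  have h2 : ∑ g : G, ((ν (g₀ * g) : ℤˣ) : ℤ) = - ∑ g : G, ((ν g : ℤˣ) : ℤ) := by
    rw [← Finset.sum_neg_distrib]
    refine Finset.sum_congr rfl fun g _ => ?_
    rw [map_mul, hg₀]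
    push_cast
    ring
  have := h.trans h2
  linarith

/-- Weight space decomposition for a finite elementary abelian 2-group acting on a
2-divisible abelian group with trivial 2-torsion. -/
theorem stmt_4 {V E : Type*} [AddCommGroup V] [Group E] [Fintype E]
    [DistribMulAction E V] [Fintype (E →* ℤˣ)]
    (hE : ∀ e : E, e * e = 1)
    (hdiv : ∀ v : V, ∃ w : V, 2 • w = v)
    (htor : ∀ v : V, 2 • v = 0 → v = 0) :
    ∀ v : V, ∃! f : (E →* ℤˣ) → V,
      (∀ lam : E →* ℤˣ, ∀ e : E, e • f lam = (lam e : ℤ) • f lam) ∧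
      v = ∑ lam : E →* ℤˣ, f lam := by
  haveI : Fact (Nat.Prime 2) := ⟨Nat.prime_two⟩
  have hzsmul : ∀ (e : E) (z : ℤ) (x : V), e • (z • x) = z • (e • x) := fun e z x =>
    AddMonoidHom.map_zsmul (DistribMulAction.toAddMonoidHom V e) z x
  have hchar2 : ∀ ν : E →* ℤˣ, ν * ν = 1 := fun ν => by
    ext e
    simp [Int.units_mul_self]
  have hEP : IsPGroup 2 E := fun g => ⟨1, by simpa [pow_succ, pow_one] using hE g⟩
  have hCP : IsPGroup 2 (E →* ℤˣ) := fun ν => ⟨1, by simpa [pow_succ, pow_one] using hchar2 ν⟩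
  obtain ⟨k, hk⟩ := IsPGroup.iff_card.mp hEP
  obtain ⟨m, hm⟩ := IsPGroup.iff_card.mp hCP
  rw [Nat.card_eq_fintype_card] at hk hm
  -- column orthogonality
  have col : ∀ e : E, e ≠ 1 → ∑ lam : E →* ℤˣ, ((lam e : ℤˣ) : ℤ) = 0 := by
    intro e he
    obtain ⟨lam₀, hlam₀⟩ := aux_sep hE he
    exact aux_sum_zero
      { toFun := fun lam => lam e, map_one' := rfl, map_mul' := fun a b => rfl }
      ⟨lam₀, hlam₀⟩
  -- row orthogonality
  have row : ∀ ν : E →* ℤˣ, ν ≠ 1 → ∑ e : E, ((ν e : ℤˣ) : ℤ) = 0 := by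
    intro ν hν
    apply aux_sum_zero
    by_contra h
    push_neg at h
    apply hν
    ext e
    rcases Int.units_eq_one_or (ν e) with h1 | h1
    · simpa using h1
    · exact absurd h1 (h e)
  -- equivariance of the unnormalized projection
  have equivS : ∀ (lam : E →* ℤˣ) (w : V) (e₀ : E),
      e₀ • (∑ e : E, ((lam e : ℤˣ) : ℤ) • (e • w))
        = ((lam e₀ : ℤˣ) : ℤ) • ∑ e : E, ((lam e : ℤˣ) : ℤ) • (e • w) := by
    intro lam w e₀
    rw [Finset.smul_sum, Finset.smul_sum]
    calc ∑ e : E, e₀ • (((lam e : ℤˣ) : ℤ) • (e • w))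
        = ∑ e : E, ((lam e : ℤˣ) : ℤ) • ((e₀ * e) • w) :=
          Finset.sum_congr rfl fun e _ => by rw [hzsmul, mul_smul]
      _ = ∑ e : E, ((lam (e₀⁻¹ * e) : ℤˣ) : ℤ) • (e • w) :=
          Fintype.sum_equiv (Equiv.mulLeft e₀) _ _ (fun e => by simp)
      _ = ∑ e : E, ((lam e₀ : ℤˣ) : ℤ) • (((lam e : ℤˣ) : ℤ) • (e • w)) := by
          refine Finset.sum_congr rfl fun e _ => ?_
          rw [inv_eq_of_mul_eq_one_right (hE e₀), map_mul, smul_smul]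
          push_cast
          ring_nf
  -- column sum
  have colsum : ∀ w : V,
      ∑ lam : E →* ℤˣ, ∑ e : E, ((lam e : ℤˣ) : ℤ) • (e • w)
        = (Fintype.card (E →* ℤˣ) : ℤ) • w := by
    intro w
    rw [Finset.sum_comm]
    have h1 : ∀ e : E, ∑ lam : E →* ℤˣ, ((lam e : ℤˣ) : ℤ) • (e • w)
        = (∑ lam : E →* ℤˣ, ((lam e : ℤˣ) : ℤ)) • (e • w) := fun e =>
      (Finset.sum_smul).symm
    rw [Finset.sum_congr rfl fun e _ => h1 e]
    rw [Finset.sum_eq_single (1 : E)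
      (fun e _ he => by rw [col e he, zero_smul])
      (fun h => absurd (Finset.mem_univ 1) h)]
    simp
  -- key formula: any equivariant decomposition is given by the projections
  have keyf : ∀ (f : (E →* ℤˣ) → V),
      (∀ lam : E →* ℤˣ, ∀ e : E, e • f lam = ((lam e : ℤˣ) : ℤ) • f lam) →
      ∀ lam : E →* ℤˣ,
        ∑ e : E, ((lam e : ℤˣ) : ℤ) • (e • ∑ mu : E →* ℤˣ, f mu)
          = (Fintype.card E : ℤ) • f lam := by
    intro f hf lam
    have h1 : ∀ e : E, ((lam e : ℤˣ) : ℤ) • (e • ∑ mu : E →* ℤˣ, f mu)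
        = ∑ mu : E →* ℤˣ, (((lam e : ℤˣ) : ℤ) * ((mu e : ℤˣ) : ℤ)) • f mu := by
      intro e
      rw [Finset.smul_sum, Finset.smul_sum]
      exact Finset.sum_congr rfl fun mu _ => by rw [hf mu e, smul_smul]
    rw [Finset.sum_congr rfl fun e _ => h1 e, Finset.sum_comm]
    have h2 : ∀ mu : E →* ℤˣ, ∑ e : E, (((lam e : ℤˣ) : ℤ) * ((mu e : ℤˣ) : ℤ)) • f mu
        = (∑ e : E, (((lam * mu) e : ℤˣ) : ℤ)) • f mu := by
      intro mu
      rw [← Finset.sum_smul]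
      congr 1
    rw [Finset.sum_congr rfl fun mu _ => h2 mu]
    rw [Finset.sum_eq_single lam]
    · have : ∀ e : E, (((lam * lam) e : ℤˣ) : ℤ) = 1 := fun e => by
        rw [hchar2 lam]; simp
      rw [Finset.sum_congr rfl fun e _ => this e]
      simp [hk]
    · intro mu _ hmu
      have hne : lam * mu ≠ 1 := by
        intro hcontra
        apply hmu
        have : mu = lam⁻¹ := eq_inv_of_mul_eq_one_left (by rw [mul_comm]; exact hcontra)
        rw [this, inv_eq_of_mul_eq_one_right (hchar2 lam)]
      rw [row _ hne, zero_smul]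
    · intro h
      exact absurd (Finset.mem_univ lam) h
  -- main construction
  intro v
  have hg : ∀ lam : E →* ℤˣ, ∃ w : V,
      (2 ^ m : ℤ) • w = ∑ e : E, ((lam e : ℤˣ) : ℤ) • (e • v) :=
    fun lam => aux_pow_surj hdiv m _
  choose g hgspec using hg
  have hgequiv : ∀ lam : E →* ℤˣ, ∀ e₀ : E, e₀ • g lam = ((lam e₀ : ℤˣ) : ℤ) • g lam := by
    intro lam e₀
    apply aux_pow_inj htor m
    calc (2 ^ m : ℤ) • (e₀ • g lam) = e₀ • ((2 ^ m : ℤ) • g lam) := (hzsmul e₀ _ _).symm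
      _ = e₀ • ∑ e : E, ((lam e : ℤˣ) : ℤ) • (e • v) := by rw [hgspec]
      _ = ((lam e₀ : ℤˣ) : ℤ) • ∑ e : E, ((lam e : ℤˣ) : ℤ) • (e • v) := equivS lam v e₀
      _ = ((lam e₀ : ℤˣ) : ℤ) • ((2 ^ m : ℤ) • g lam) := by rw [hgspec]
      _ = (2 ^ m : ℤ) • (((lam e₀ : ℤˣ) : ℤ) • g lam) := by
          rw [smul_smul, smul_smul, mul_comm]
  have hgsum : v = ∑ lam : E →* ℤˣ, g lam := by
    apply aux_pow_inj htor m
    rw [Finset.smul_sum]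
    rw [Finset.sum_congr rfl fun lam _ => hgspec lam]
    rw [colsum v, hm]
    norm_cast
  refine ⟨g, ⟨hgequiv, hgsum⟩, ?_⟩
  rintro f ⟨hf1, hf2⟩
  funext lam
  apply aux_pow_inj htor k
  have hfk := keyf f hf1 lam
  have hgk := keyf g hgequiv lam
  rw [← hf2] at hfk
  rw [← hgsum] at hgk
  calc (2 ^ k : ℤ) • f lam = (Fintype.card E : ℤ) • f lam := by rw [hk]; norm_cast
    _ = ∑ e : E, ((lam e : ℤˣ) : ℤ) • (e • v) := hfk.symm
    _ = (Fintype.card E : ℤ) • g lam := hgk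
    _ = (2 ^ k : ℤ) • g lam := by rw [hk]; norm_cast
end

section
/- Let γ and δ be disjoint 3-cycles in Sym(n) acting on an abelian group V of exponent 2, and set ε = γδ. If tr_γ = tr_δ = tr_ε = 0 in End(V) (where tr_σ = 1 + σ + σ²), then γ + δ = 0 in End(V), i.e., γ and δ act identically on V; in particular, if the action of ⟨γ, δ⟩ is faithful and V ≠ 0, not all three of tr_γ, tr_δ, tr_ε can vanish. -/
/-!
Let `a, b` be the images of `γ, δ` in the endomorphism ring of `V`, and let `T₁, T₂, T₃` be the
three traces, which vanish by hypothesis. Since `a` and `b` commute, `(ab)² = a²b²`, and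
`a + b + 2(1 + ab) = T₁ + T₁ b + T₃ - a² T₂`; exponent 2 removes the `2(1 + ab)`, so `a + b = 0`.

If the action of `⟨γ, δ⟩` is faithful, then `γ = δ`, hence `γ = 1` by disjointness, and the
trace of the identity is `3 = 1 ≠ 0` on a nonzero `V`.
-/

theorem Commute.add_add_two_mul_eq_zero {R : Type*} [Ring R] {a b : R} (hab : Commute a b)
    (ha : 1 + a + a ^ 2 = 0) (hb : 1 + b + b ^ 2 = 0) (hab' : 1 + a * b + (a * b) ^ 2 = 0) :
    a + b + 2 * (1 + a * b) = 0 := by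
  rw [hab.mul_pow] at hab'
  calc a + b + 2 * (1 + a * b)
      = (1 + a + a ^ 2) + (1 + a + a ^ 2) * b + (1 + a * b + a ^ 2 * b ^ 2)
          - a ^ 2 * (1 + b + b ^ 2) := by noncomm_ring
    _ = 0 := by rw [ha, hb, hab']; simp

theorem AddMonoid.End.two_eq_zero {V : Type*} [AddCommMonoid V] (h : ∀ v : V, v + v = 0) :
    (2 : AddMonoid.End V) = 0 :=
  AddMonoid.End.ext _ fun v => by simpa [two_nsmul] using h v

theorem DistribMulAction.toAddMonoidEnd_trace_eq_zero {M V : Type*} [Monoid M] [AddCommMonoid V]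
    [DistribMulAction M V] {σ : M} (h : ∀ v : V, v + σ • v + (σ ^ 2) • v = 0) :
    1 + toAddMonoidEnd M V σ + toAddMonoidEnd M V σ ^ 2 = 0 :=
  AddMonoid.End.ext _ fun v => by
    rw [← map_pow]
    exact h v

theorem stmt_16_general {V : Type*} [AddCommGroup V] (hexp : ∀ v : V, v + v = 0)
    (n : ℕ) [DistribMulAction (Equiv.Perm (Fin n)) V]
    (γ δ : Equiv.Perm (Fin n))
    (hdisj : Equiv.Perm.Disjoint γ δ)
    (h1 : ∀ v : V, v + γ • v + (γ ^ 2) • v = 0)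
    (h2 : ∀ v : V, v + δ • v + (δ ^ 2) • v = 0)
    (h3 : ∀ v : V, v + (γ * δ) • v + ((γ * δ) ^ 2) • v = 0) :
    (∀ v : V, γ • v + δ • v = 0) ∧
    (Nontrivial V →
      (∀ g ∈ Subgroup.closure ({γ, δ} : Set (Equiv.Perm (Fin n))),
        (∀ v : V, g • v = v) → g = 1) → False) := by
  let ρ := DistribMulAction.toAddMonoidEnd (Equiv.Perm (Fin n)) V
  have hsum : ρ γ + ρ δ = 0 := by
    have := (hdisj.commute.map ρ).add_add_two_mul_eq_zero
      (DistribMulAction.toAddMonoidEnd_trace_eq_zero h1)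
      (DistribMulAction.toAddMonoidEnd_trace_eq_zero h2)
      (by simpa only [map_mul] using DistribMulAction.toAddMonoidEnd_trace_eq_zero h3)
    rwa [AddMonoid.End.two_eq_zero hexp, zero_mul, add_zero] at this
  have hsum_apply (v : V) : γ • v + δ • v = 0 := DFunLike.congr_fun hsum v
  refine ⟨hsum_apply, fun hV hfaithful => ?_⟩
  have hγδ : γ * δ⁻¹ = 1 := by
    refine hfaithful _ (mul_mem (Subgroup.subset_closure (by simp))
      (inv_mem (Subgroup.subset_closure (by simp)))) fun v => ?_
    have hv := hsum_apply (δ⁻¹ • v)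
    rw [smul_inv_smul, add_eq_zero_iff_eq_neg, neg_eq_of_add_eq_zero_left (hexp v)] at hv
    rw [mul_smul, hv]
  rw [mul_inv_eq_one] at hγδ
  subst hγδ
  obtain ⟨v, hv⟩ := exists_ne (0 : V)
  refine hv ?_
  simpa [Equiv.Perm.disjoint_refl_iff.mp hdisj, hexp] using h1 v

/-- For disjoint 3-cycles γ, δ acting on a group of exponent 2 with
tr_γ = tr_δ = tr_{γδ} = 0, one gets γ + δ = 0 in End(V); in particular a
faithful action of ⟨γ,δ⟩ on nonzero V is impossible. -/
theorem stmt_16 {V : Type*} [AddCommGroup V] (hexp : ∀ v : V, v + v = 0)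
    (n : ℕ) [DistribMulAction (Equiv.Perm (Fin n)) V]
    (γ δ : Equiv.Perm (Fin n))
    (hγ : Equiv.Perm.IsThreeCycle γ) (hδ : Equiv.Perm.IsThreeCycle δ)
    (hdisj : Equiv.Perm.Disjoint γ δ)
    (h1 : ∀ v : V, v + γ • v + (γ ^ 2) • v = 0)
    (h2 : ∀ v : V, v + δ • v + (δ ^ 2) • v = 0)
    (h3 : ∀ v : V, v + (γ * δ) • v + ((γ * δ) ^ 2) • v = 0) :
    (∀ v : V, γ • v + δ • v = 0) ∧
    (Nontrivial V →
      (∀ g ∈ Subgroup.closure ({γ, δ} : Set (Equiv.Perm (Fin n))),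
        (∀ v : V, g • v = v) → g = 1) → False) :=
  stmt_16_general hexp n γ δ hdisj h1 h2 h3
end

section
/- Let n ≥ 5 and let V be a nonzero 𝔽_p[Sym(n)]-module with the property that [Sym(n),V] = V and C_V(Sym(n)) = 0, and such that for every transposition τ = (ij) and every transposition (kℓ) disjoint from (ij), (1-(ij))(1-(kℓ)) = 0 in End(V), and for transpositions sharing a symbol, (1-(ij))(1-(ik)) = (jk)(1-(ik)). Then the map φ : ustd(n, B) → V defined by φ(f_i ⊗ ℓ) = (1 i)·ℓ, where B = im(1 - (1 n)) and f_i = e_i - e_n, is a well-defined surjective homomorphism of Sym(n)-modules. -/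
/-- Under the local relations between transpositions, the natural map
φ : ustd(n, B) → V, φ(f_i ⊗ ℓ) = (1 i)·ℓ with B = im(1 - (1 n)), is a
well-defined surjective morphism of Sym(n)-modules.  Here ustd(n, B) is
realized as the zero-sum tuples with entries in B. -/
theorem stmt_18 {V : Type*} [AddCommGroup V] (p m : ℕ) [Fact p.Prime]
    (hm : 5 ≤ m + 1) [Nontrivial V]
    [Module (ZMod p) V] [DistribMulAction (Equiv.Perm (Fin (m + 1))) V]
    [SMulCommClass (Equiv.Perm (Fin (m + 1))) (ZMod p) V]
    (hbrk : ∀ v : V, v ∈ AddSubgroup.closure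
      {x : V | ∃ (σ : Equiv.Perm (Fin (m + 1))) (u : V), x = σ • u - u})
    (hcent : ∀ v : V, (∀ σ : Equiv.Perm (Fin (m + 1)), σ • v = v) → v = 0)
    (hdisjrel : ∀ i j k l : Fin (m + 1),
      i ≠ j → k ≠ l → i ≠ k → i ≠ l → j ≠ k → j ≠ l →
      ∀ v : V,
        (v - Equiv.swap k l • v) - Equiv.swap i j • (v - Equiv.swap k l • v) = 0)
    (hsharerel : ∀ i j k : Fin (m + 1), i ≠ j → i ≠ k → j ≠ k →
      ∀ v : V,
        (v - Equiv.swap i k • v) - Equiv.swap i j • (v - Equiv.swap i k • v)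
          = Equiv.swap j k • (v - Equiv.swap i k • v)) :
    let B : Set V := Set.range
      (fun v : V => v - Equiv.swap (0 : Fin (m + 1)) (Fin.last m) • v)
    let φ : (Fin (m + 1) → V) → V := fun w =>
      ∑ i : Fin m, Equiv.swap (0 : Fin (m + 1)) (Fin.castSucc i) • w (Fin.castSucc i)
    (∀ w w' : Fin (m + 1) → V, φ (w + w') = φ w + φ w') ∧
    (∀ (σ : Equiv.Perm (Fin (m + 1))) (w : Fin (m + 1) → V),
      (∀ j, w j ∈ B) → (∑ j, w j = 0) →
      φ (fun j => w (σ⁻¹ j)) = σ • φ w) ∧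
    (∀ v : V, ∃ w : Fin (m + 1) → V,
      (∀ j, w j ∈ B) ∧ (∑ j, w j = 0) ∧ φ w = v) := by
  intro B φ
  classical
  have h0L : (0 : Fin (m + 1)) ≠ Fin.last m := by
    intro h
    have := congrArg Fin.val h
    simp only [Fin.val_zero, Fin.val_last] at this
    omega
  -- trivial smul facts
  have hsw00 : ∀ x : V, Equiv.swap (0 : Fin (m+1)) 0 • x = x := by
    intro x
    rw [Equiv.swap_self, ← Equiv.Perm.one_def, one_smul]
  -- basic facts about B
  have hB0 : (0 : V) ∈ B := ⟨0, by simp⟩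
  have hBneg : ∀ c ∈ B, -c ∈ B := by
    rintro _ ⟨v, rfl⟩
    refine ⟨Equiv.swap (0 : Fin (m+1)) (Fin.last m) • v, ?_⟩
    dsimp only
    rw [smul_smul, Equiv.swap_mul_self, one_smul, neg_sub]
  have hBadd : ∀ c ∈ B, ∀ d ∈ B, c + d ∈ B := by
    rintro _ ⟨v, rfl⟩ _ ⟨u, rfl⟩
    refine ⟨v + u, ?_⟩
    dsimp only
    rw [smul_add]
    abel
  have hBD : ∀ c ∈ B, Equiv.swap (0 : Fin (m+1)) (Fin.last m) • c = -c := by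
    rintro _ ⟨v, rfl⟩
    dsimp only
    rw [smul_sub, smul_smul, Equiv.swap_mul_self, one_smul, neg_sub]
  have hBA : ∀ i j : Fin (m+1), i ≠ j → i ≠ 0 → i ≠ (Fin.last m) → j ≠ 0 → j ≠ (Fin.last m) →
      ∀ c ∈ B, Equiv.swap i j • c = c := by
    rintro i j hij hi0 hiL hj0 hjL _ ⟨v, rfl⟩
    dsimp only
    have h := hdisjrel i j 0 (Fin.last m) hij h0L hi0 hiL hj0 hjL v
    rw [sub_eq_zero] at h
    exact h.symm
  -- the "shared symbol" relation specialized to B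
  have hBB : ∀ j : Fin (m+1), j ≠ 0 → j ≠ (Fin.last m) →
      ∀ c ∈ B, Equiv.swap (0 : Fin (m+1)) j • c = c - Equiv.swap j (Fin.last m) • c := by
    rintro j hj0 hjL _ ⟨v, rfl⟩
    dsimp only
    have h := hsharerel 0 j (Fin.last m) (Ne.symm hj0) h0L hjL v
    rw [← h, sub_sub_cancel]
  have hBB' : ∀ j : Fin (m+1), j ≠ 0 → j ≠ (Fin.last m) →
      ∀ c ∈ B, Equiv.swap j (Fin.last m) • c = c - Equiv.swap (0 : Fin (m+1)) j • c := by
    intro j hj0 hjL c hc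
    rw [hBB j hj0 hjL c hc, sub_sub_cancel]
  -- conjugation helper
  have hconj : ∀ a b c : Fin (m+1), a ≠ b → b ≠ c → a ≠ c →
      Equiv.swap a c * Equiv.swap a b = Equiv.swap a b * Equiv.swap b c := by
    intro a b c hab hbc hac
    have h := Equiv.swap_apply_apply (Equiv.swap a b) b c
    rw [Equiv.swap_apply_right, Equiv.swap_apply_of_ne_of_ne (Ne.symm hac) (Ne.symm hbc)] at h
    rw [h, Equiv.swap_inv, mul_assoc, Equiv.swap_mul_self, mul_one]
  -- φ as a full sum
  have hφ : ∀ w : Fin (m+1) → V,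
      φ w = (∑ J : Fin (m+1), Equiv.swap (0 : Fin (m+1)) J • w J)
        - Equiv.swap (0 : Fin (m+1)) (Fin.last m) • w (Fin.last m) := by
    intro w
    rw [Fin.sum_univ_castSucc (f := fun J => Equiv.swap (0 : Fin (m+1)) J • w J)]
    simp only [φ]
    abel
  -- additivity
  have hadd : ∀ w w' : Fin (m + 1) → V, φ (w + w') = φ w + φ w' := by
    intro w w'
    simp only [φ, Pi.add_apply, smul_add, Finset.sum_add_distrib]
  have hneg : ∀ w : Fin (m + 1) → V, φ (-w) = -φ w := by
    intro w
    simp only [φ, Pi.neg_apply, smul_neg, Finset.sum_neg_distrib]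
  have hzero : φ 0 = 0 := by
    simp only [φ, Pi.zero_apply, smul_zero, Finset.sum_const_zero]
  -- equivariance for swaps (0 b)
  have hP0 : ∀ b : Fin (m+1), ∀ w : Fin (m + 1) → V,
      (∀ j, w j ∈ B) → (∑ j, w j = 0) →
      φ (fun j => w ((Equiv.swap (0 : Fin (m+1)) b)⁻¹ j))
        = Equiv.swap (0 : Fin (m+1)) b • φ w := by
    intro b w hwB hws
    rw [Equiv.swap_inv]
    by_cases hb0 : b = 0
    · subst hb0
      have : (fun j => w (Equiv.swap (0 : Fin (m+1)) 0 j)) = w := by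
        funext j
        rw [Equiv.swap_self]
        rfl
      rw [this, hsw00]
    by_cases hbL : b = (Fin.last m)
    · -- the case b = last
      subst hbL
      rw [hφ (fun j => w (Equiv.swap (0 : Fin (m+1)) (Fin.last m) j)), hφ w,
        Equiv.swap_apply_right]
      have hre : (∑ J : Fin (m+1), Equiv.swap (0 : Fin (m+1)) J • w (Equiv.swap (0:Fin (m+1)) (Fin.last m) J))
          = ∑ J : Fin (m+1), Equiv.swap (0 : Fin (m+1)) (Equiv.swap (0:Fin (m+1)) (Fin.last m) J) • w J := by
        refine (Fintype.sum_equiv (Equiv.swap (0:Fin (m+1)) (Fin.last m))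
          (fun J => Equiv.swap (0 : Fin (m+1)) (Equiv.swap (0:Fin (m+1)) (Fin.last m) J) • w J)
          (fun J => Equiv.swap (0 : Fin (m+1)) J • w (Equiv.swap (0:Fin (m+1)) (Fin.last m) J)) ?_).symm
        intro x
        rw [Equiv.swap_apply_self]
      have hpt : ∀ J : Fin (m+1),
          Equiv.swap (0 : Fin (m+1)) (Equiv.swap (0:Fin (m+1)) (Fin.last m) J) • w J
            = Equiv.swap (0:Fin (m+1)) (Fin.last m) • (Equiv.swap (0 : Fin (m+1)) J • w J) + w J
              - (if J = 0 then w 0 else 0) - (if J = (Fin.last m) then w (Fin.last m) else 0) := by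
        intro J
        by_cases h1 : J = 0
        · subst h1
          rw [Equiv.swap_apply_left, if_pos rfl, if_neg h0L, hsw00, hBD _ (hwB 0)]
          abel
        by_cases h2 : J = (Fin.last m)
        · subst h2
          rw [Equiv.swap_apply_right, if_neg h1, if_pos rfl, hsw00, smul_smul,
            Equiv.swap_mul_self, one_smul]
          abel
        · rw [Equiv.swap_apply_of_ne_of_ne h1 h2, if_neg h1, if_neg h2, smul_smul,
            hconj 0 J (Fin.last m) (Ne.symm h1) h2 h0L, mul_smul,
            hBB' J h1 h2 _ (hwB J), smul_sub, smul_smul, Equiv.swap_mul_self, one_smul]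
          abel
      rw [hre, Finset.sum_congr rfl (fun J _ => hpt J)]
      rw [Finset.sum_sub_distrib, Finset.sum_sub_distrib, Finset.sum_add_distrib,
        Finset.sum_ite_eq' Finset.univ (0 : Fin (m+1)) (fun _ => w 0),
        Finset.sum_ite_eq' Finset.univ (Fin.last m) (fun _ => w (Fin.last m)),
        hws, ← Finset.smul_sum]
      simp only [Finset.mem_univ, if_pos]
      rw [hBD _ (hwB 0), smul_sub, smul_smul, Equiv.swap_mul_self, one_smul]
      abel
    · -- the case b ∉ {0, last}
      rw [hφ (fun j => w (Equiv.swap (0 : Fin (m+1)) b j)), hφ w]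
      have hbne : Equiv.swap (0 : Fin (m+1)) b (Fin.last m) = (Fin.last m) :=
        Equiv.swap_apply_of_ne_of_ne (Ne.symm h0L) (fun h => hbL h.symm)
      have hre : (∑ J : Fin (m+1), Equiv.swap (0 : Fin (m+1)) J • w (Equiv.swap (0:Fin (m+1)) b J))
          = ∑ J : Fin (m+1), Equiv.swap (0 : Fin (m+1)) (Equiv.swap (0:Fin (m+1)) b J) • w J := by
        refine (Fintype.sum_equiv (Equiv.swap (0:Fin (m+1)) b)
          (fun J => Equiv.swap (0 : Fin (m+1)) (Equiv.swap (0:Fin (m+1)) b J) • w J)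
          (fun J => Equiv.swap (0 : Fin (m+1)) J • w (Equiv.swap (0:Fin (m+1)) b J)) ?_).symm
        intro x
        rw [Equiv.swap_apply_self]
      have hpt : ∀ J : Fin (m+1),
          Equiv.swap (0 : Fin (m+1)) (Equiv.swap (0:Fin (m+1)) b J) • w J
            = Equiv.swap (0:Fin (m+1)) b • (Equiv.swap (0 : Fin (m+1)) J • w J)
              + (if J = (Fin.last m) then Equiv.swap (0:Fin (m+1)) b • w (Fin.last m) - w (Fin.last m) else 0) := by
        intro J
        by_cases h1 : J = 0
        · subst h1
          rw [Equiv.swap_apply_left, if_neg h0L, hsw00]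
          abel
        by_cases h3 : J = b
        · subst h3
          rw [Equiv.swap_apply_right, if_neg hbL, hsw00, smul_smul, Equiv.swap_mul_self, one_smul]
          abel
        by_cases h2 : J = (Fin.last m)
        · subst h2
          rw [Equiv.swap_apply_of_ne_of_ne h1 h3, if_pos rfl, hBD _ (hwB (Fin.last m)), smul_neg,
            hBB b hb0 hbL _ (hwB (Fin.last m))]
          abel
        · rw [Equiv.swap_apply_of_ne_of_ne h1 h3, if_neg h2, smul_smul,
            hconj 0 J b (Ne.symm h1) h3 (Ne.symm hb0), mul_smul,
            hBA J b h3 h1 h2 hb0 hbL _ (hwB J), add_zero]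
      rw [hre, Finset.sum_congr rfl (fun J _ => hpt J)]
      rw [Finset.sum_add_distrib,
        Finset.sum_ite_eq' Finset.univ (Fin.last m)
          (fun _ => Equiv.swap (0:Fin (m+1)) b • w (Fin.last m) - w (Fin.last m)),
        ← Finset.smul_sum, hbne]
      simp only [Finset.mem_univ, if_pos]
      rw [smul_sub, hBD _ (hwB (Fin.last m)), smul_neg]
      abel
  -- composition of equivariance
  have hcomp : ∀ σ τ : Equiv.Perm (Fin (m+1)),
      (∀ w : Fin (m + 1) → V, (∀ j, w j ∈ B) → (∑ j, w j = 0) →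
        φ (fun j => w (σ⁻¹ j)) = σ • φ w) →
      (∀ w : Fin (m + 1) → V, (∀ j, w j ∈ B) → (∑ j, w j = 0) →
        φ (fun j => w (τ⁻¹ j)) = τ • φ w) →
      (∀ w : Fin (m + 1) → V, (∀ j, w j ∈ B) → (∑ j, w j = 0) →
        φ (fun j => w ((σ * τ)⁻¹ j)) = (σ * τ) • φ w) := by
    intro σ τ hσ hτ w hwB hws
    have e1 : (fun j => w ((σ * τ)⁻¹ j)) = fun j => (fun k => w (τ⁻¹ k)) (σ⁻¹ j) := by
      funext j
      simp [mul_inv_rev, Equiv.Perm.mul_apply]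
    rw [e1, hσ (fun k => w (τ⁻¹ k)) (fun j => hwB _)
      ((Equiv.sum_comp τ⁻¹ w).trans hws), hτ w hwB hws, mul_smul]
  -- equivariance for all swaps
  have hPsw : ∀ x y : Fin (m+1), ∀ w : Fin (m + 1) → V,
      (∀ j, w j ∈ B) → (∑ j, w j = 0) →
      φ (fun j => w ((Equiv.swap x y)⁻¹ j)) = Equiv.swap x y • φ w := by
    intro x y
    by_cases hx0 : x = 0
    · subst hx0; exact hP0 y
    by_cases hy0 : y = 0
    · subst hy0
      rw [Equiv.swap_comm]
      exact hP0 x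
    by_cases hxy : x = y
    · subst hxy
      intro w hwB hws
      have : (fun j => w ((Equiv.swap x x)⁻¹ j)) = w := by
        funext j
        rw [Equiv.swap_self]
        rfl
      rw [this, Equiv.swap_self, ← Equiv.Perm.one_def, one_smul]
    · have hdec : Equiv.swap x y
          = Equiv.swap (0:Fin (m+1)) x * (Equiv.swap (0:Fin (m+1)) y * Equiv.swap (0:Fin (m+1)) x) := by
        rw [hconj 0 x y (Ne.symm hx0) hxy (Ne.symm hy0), ← mul_assoc, Equiv.swap_mul_self, one_mul]
      rw [hdec]
      exact hcomp _ _ (hP0 x) (hcomp _ _ (hP0 y) (hP0 x))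
  -- full equivariance
  have hmain : ∀ (σ : Equiv.Perm (Fin (m + 1))) (w : Fin (m + 1) → V),
      (∀ j, w j ∈ B) → (∑ j, w j = 0) →
      φ (fun j => w (σ⁻¹ j)) = σ • φ w := by
    intro σ
    refine Equiv.Perm.swap_induction_on σ ?_ ?_
    · intro w hwB hws
      have h1 : (fun j => w ((1 : Equiv.Perm (Fin (m+1)))⁻¹ j)) = w := by
        funext j
        simp
      rw [h1, one_smul]
    · intro f x y hxy ih
      exact hcomp _ _ (hPsw x y) ih
  refine ⟨hadd, hmain, ?_⟩
  -- surjectivity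
  let S : AddSubgroup V :=
    { carrier := {v | ∃ w : Fin (m+1) → V,
        (∀ j, w j ∈ B) ∧ (∑ j, w j = 0) ∧ φ w = v}
      zero_mem' := ⟨0, fun _ => hB0, by simp, hzero⟩
      add_mem' := by
        rintro v v' ⟨w, hw1, hw2, rfl⟩ ⟨w', hw1', hw2', rfl⟩
        exact ⟨w + w', fun j => hBadd _ (hw1 j) _ (hw1' j),
          by simp only [Pi.add_apply, Finset.sum_add_distrib, hw2, hw2', add_zero], hadd w w'⟩
      neg_mem' := by
        rintro v ⟨w, hw1, hw2, rfl⟩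
        exact ⟨-w, fun j => hBneg _ (hw1 j),
          by simp only [Pi.neg_apply, Finset.sum_neg_distrib, hw2, neg_zero], hneg w⟩ }
  -- helpers for sums of two-point functions
  have hite : ∀ (a b : Fin (m+1)) (f g : V), a ≠ b → ∀ J : Fin (m+1),
      (if J = a then f else if J = b then g else 0)
        = (if J = a then f else 0) + (if J = b then g else 0) := by
    intro a b f g hab J
    by_cases h1 : J = a
    · subst h1
      simp [hab]
    · by_cases h2 : J = b
      · subst h2
        simp [h1]
      · simp [h1, h2]
  have hites : ∀ (b : Fin (m+1)) (f g : V), (0 : Fin (m+1)) ≠ b → ∀ J : Fin (m+1),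
      Equiv.swap (0:Fin (m+1)) J • (if J = 0 then f else if J = b then g else 0)
        = (if J = 0 then f else 0)
          + (if J = b then Equiv.swap (0:Fin (m+1)) b • g else 0) := by
    intro b f g hb J
    by_cases h1 : J = 0
    · subst h1
      rw [if_pos rfl, if_neg hb, add_zero, hsw00, if_pos rfl]
    · by_cases h2 : J = b
      · subst h2
        simp [h1]
      · simp [h1, h2]
  have hsum2 : ∀ (b : Fin (m+1)) (f g : V), (0 : Fin (m+1)) ≠ b →
      (∑ J : Fin (m+1), (if J = 0 then f else if J = b then g else 0)) = f + g := by
    intro b f g hb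
    rw [Finset.sum_congr rfl (fun J _ => hite 0 b f g hb J), Finset.sum_add_distrib,
      Finset.sum_ite_eq' Finset.univ (0 : Fin (m+1)) (fun _ => f),
      Finset.sum_ite_eq' Finset.univ b (fun _ => g)]
    simp
  have hsum2s : ∀ (b : Fin (m+1)) (f g : V), (0 : Fin (m+1)) ≠ b →
      (∑ J : Fin (m+1),
          Equiv.swap (0:Fin (m+1)) J • (if J = 0 then f else if J = b then g else 0))
        = f + Equiv.swap (0:Fin (m+1)) b • g := by
    intro b f g hb
    rw [Finset.sum_congr rfl (fun J _ => hites b f g hb J), Finset.sum_add_distrib,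
      Finset.sum_ite_eq' Finset.univ (0 : Fin (m+1)) (fun _ => f),
      Finset.sum_ite_eq' Finset.univ b (fun _ => Equiv.swap (0:Fin (m+1)) b • g)]
    simp
  -- generator: swaps (0 k)
  have hz : ∀ (k : Fin (m+1)) (u : V), Equiv.swap (0 : Fin (m+1)) k • u - u ∈ S := by
    intro k u
    by_cases hk0 : k = 0
    · subst hk0
      rw [hsw00, sub_self]
      exact S.zero_mem
    by_cases hkL : k = (Fin.last m)
    · -- k = last
      subst hkL
      set c : V := u - Equiv.swap (0 : Fin (m+1)) (Fin.last m) • u with hc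
      have hcB : c ∈ B := ⟨u, rfl⟩
      refine ⟨fun j => if j = 0 then -c else if j = (Fin.last m) then c else 0,
        ?_, ?_, ?_⟩
      · intro j
        by_cases h1 : j = 0
        · simp only [if_pos h1]; exact hBneg _ hcB
        by_cases h2 : j = (Fin.last m)
        · simp only [if_neg h1, if_pos h2]; exact hcB
        · simp only [if_neg h1, if_neg h2]; exact hB0
      · exact (hsum2 (Fin.last m) (-c) c h0L).trans (by abel)
      · rw [hφ (fun j => if j = 0 then -c else if j = (Fin.last m) then c else 0)]
        have hL0 : ((Fin.last m) : Fin (m+1)) ≠ 0 := Ne.symm h0L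
        rw [hsum2s (Fin.last m) (-c) c h0L, if_neg hL0, if_pos rfl, hBD _ hcB, hc]
        abel
    · -- k ∉ {0, last}
      set y : V := u - Equiv.swap (0 : Fin (m+1)) k • u with hy
      set c : V := y - Equiv.swap (0 : Fin (m+1)) (Fin.last m) • y with hc
      have hcB : c ∈ B := ⟨y, rfl⟩
      have hkey : Equiv.swap k (Fin.last m) • y = c := by
        have h := hsharerel k (Fin.last m) 0 hkL hk0 (Ne.symm h0L) u
        rw [Equiv.swap_comm k 0, Equiv.swap_comm (Fin.last m) 0] at h
        rw [hc, hy, ← h]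
        abel
      have hyc : y = Equiv.swap k (Fin.last m) • c := by
        rw [← hkey, smul_smul, Equiv.swap_mul_self, one_smul]
      have hyc2 : y = c - Equiv.swap (0 : Fin (m+1)) k • c := by
        rw [hyc, hBB' k hk0 hkL _ hcB]
      refine ⟨fun j => if j = 0 then -c else if j = k then c else 0, ?_, ?_, ?_⟩
      · intro j
        by_cases h1 : j = 0
        · simp only [if_pos h1]; exact hBneg _ hcB
        by_cases h2 : j = k
        · simp only [if_neg h1, if_pos h2]; exact hcB
        · simp only [if_neg h1, if_neg h2]; exact hB0
      · exact (hsum2 k (-c) c (Ne.symm hk0)).trans (by abel)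
      · rw [hφ (fun j => if j = 0 then -c else if j = k then c else 0)]
        have hL0 : ((Fin.last m) : Fin (m+1)) ≠ 0 := Ne.symm h0L
        have hLk : ((Fin.last m) : Fin (m+1)) ≠ k := fun h => hkL h.symm
        rw [hsum2s k (-c) c (Ne.symm hk0), if_neg hL0, if_neg hLk, smul_zero, sub_zero]
        have h2 : Equiv.swap (0 : Fin (m+1)) k • u - u = -y := by rw [hy]; abel
        rw [h2, hyc2]
        abel
  -- all swaps
  have hsw : ∀ (x y : Fin (m+1)) (u : V), Equiv.swap x y • u - u ∈ S := by
    intro x y u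
    by_cases hx0 : x = 0
    · subst hx0; exact hz y u
    by_cases hy0 : y = 0
    · subst hy0; rw [Equiv.swap_comm]; exact hz x u
    by_cases hxy : x = y
    · subst hxy
      rw [Equiv.swap_self, ← Equiv.Perm.one_def, one_smul, sub_self]
      exact S.zero_mem
    · have hdec : Equiv.swap x y
          = Equiv.swap (0:Fin (m+1)) x * (Equiv.swap (0:Fin (m+1)) y * Equiv.swap (0:Fin (m+1)) x) := by
        rw [hconj 0 x y (Ne.symm hx0) hxy (Ne.symm hy0), ← mul_assoc, Equiv.swap_mul_self, one_mul]
      rw [hdec, mul_smul, mul_smul]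
      have hsplit : Equiv.swap (0:Fin (m+1)) x • (Equiv.swap (0:Fin (m+1)) y •
            (Equiv.swap (0:Fin (m+1)) x • u)) - u
          = (Equiv.swap (0:Fin (m+1)) x • (Equiv.swap (0:Fin (m+1)) y •
              (Equiv.swap (0:Fin (m+1)) x • u))
            - Equiv.swap (0:Fin (m+1)) y • (Equiv.swap (0:Fin (m+1)) x • u))
          + ((Equiv.swap (0:Fin (m+1)) y • (Equiv.swap (0:Fin (m+1)) x • u))
            - Equiv.swap (0:Fin (m+1)) x • u)
          + (Equiv.swap (0:Fin (m+1)) x • u - u) := by abel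
      rw [hsplit]
      exact S.add_mem (S.add_mem (hz x _) (hz y _)) (hz x u)
  -- all permutations
  have hperm : ∀ (σ : Equiv.Perm (Fin (m+1))) (u : V), σ • u - u ∈ S := by
    intro σ
    refine Equiv.Perm.swap_induction_on σ ?_ ?_
    · intro u
      rw [one_smul, sub_self]
      exact S.zero_mem
    · intro f x y hxy ih u
      have : (Equiv.swap x y * f) • u - u
          = (Equiv.swap x y • (f • u) - f • u) + (f • u - u) := by
        rw [mul_smul]; abel
      rw [this]
      exact S.add_mem (hsw x y (f • u)) (ih u)
  intro v
  have hv : v ∈ S := by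
    have hle : AddSubgroup.closure
        {x : V | ∃ (σ : Equiv.Perm (Fin (m + 1))) (u : V), x = σ • u - u} ≤ S := by
      rw [AddSubgroup.closure_le]
      rintro x ⟨σ, u, rfl⟩
      exact hperm σ u
    exact hle (hbrk v)
  exact hv
end
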